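/- For all complex numbers ψ₁, ψ₂, setting φ = (φ₁, φ₂, φ₃) ∈ ℂ³ with φ₁ = (conj ψ₂)² − ψ₁², φ₂ = i((conj ψ₂)² + ψ₁²), φ₃ = 2 i ψ₁ (conj ψ₂), the Lorentzian cross product of φ with its componentwise conjugate φ̄ satisfies φ ×_L φ̄ = 2 i (|ψ₁|² − |ψ₂|²) · (2 Im(ψ₁ψ₂), −2 Re(ψ₁ψ₂), −(|ψ₁|² + |ψ₂|²)), i.e. f⁻¹f_z ×_L f⁻¹f_{z̄} = i e^{u/2}(2 Im(ψ₁ψ₂)e₁ − 2 Re(ψ₁ψ₂)e₂ − (|ψ₁|²+|ψ₂|²)e₃) with e^{u/2} = 2(|ψ₁|² − |ψ₂|²). -/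

import Mathlib

open Complex

/-- The Lorentzian cross product on `ℂ³`: the `ℂ`-bilinear extension of the Minkowski
cross product determined by `e₁×e₂ = −e₃`, `e₂×e₃ = e₁`, `e₃×e₁ = e₂`. -/
def crossL (a b : Fin 3 → ℂ) : Fin 3 → ℂ :=
  ![a 1 * b 2 - a 2 * b 1, a 2 * b 0 - a 0 * b 2, -(a 0 * b 1 - a 1 * b 0)]

/-- For the generating spinors of a conformal spacelike immersion `f` into the
Lorentzian Heisenberg group,
`f⁻¹f_z ×_L f⁻¹f_z̄ = i e^{u/2}(2Im(ψ₁ψ₂)e₁ − 2Re(ψ₁ψ₂)e₂ − (|ψ₁|²+|ψ₂|²)e₃)`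
with `e^{u/2} = 2(|ψ₁|² − |ψ₂|²)`. -/
theorem spinor_lorentz_cross (ψ₁ ψ₂ : ℂ) :
    (let φ : Fin 3 → ℂ :=
      ![(starRingEnd ℂ) ψ₂ ^ 2 - ψ₁ ^ 2,
        Complex.I * ((starRingEnd ℂ) ψ₂ ^ 2 + ψ₁ ^ 2),
        2 * Complex.I * ψ₁ * (starRingEnd ℂ) ψ₂];
    crossL φ (fun i => (starRingEnd ℂ) (φ i)) =
      (2 * Complex.I * (((‖ψ₁‖) ^ 2 : ℝ) - ((‖ψ₂‖) ^ 2 : ℝ))) •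
        ![((2 * (ψ₁ * ψ₂).im : ℝ) : ℂ),
          ((-(2 * (ψ₁ * ψ₂).re) : ℝ) : ℂ),
          ((-((‖ψ₁‖) ^ 2 + (‖ψ₂‖) ^ 2) : ℝ) : ℂ)]) := by
  intro φ
  funext i
  have h1 : (‖ψ₁‖ ^ 2 : ℝ) = Complex.normSq ψ₁ := Complex.sq_norm ψ₁
  have h2 : (‖ψ₂‖ ^ 2 : ℝ) = Complex.normSq ψ₂ := Complex.sq_norm ψ₂
  fin_cases i <;>
    simp [crossL, φ, h1, h2, Complex.ext_iff, Complex.normSq_apply, pow_two,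
      Complex.mul_re, Complex.mul_im, Complex.conj_re, Complex.conj_im] <;>
    exact ⟨by ring, by ring⟩
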